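/- arXiv:1010.0923 — 8 statements merged into one kernel-verified Lean document; each statement's English description precedes it below -/
import Mathlib

section
/- Let (X,d) be a complete metric space and φ : X → ℝ a lower semicontinuous function bounded below. If T : X → X satisfies d(x, Tx) ≤ φ(x) − φ(Tx) for all x ∈ X, then T has a fixed point. -/
/-!
Order `X` by `x ≼ y ↔ dist x y ≤ φ x - φ y` (the Brøndsted order of `φ`). The Caristi condition says
`x ≼ T x`, so a `≼`-maximal point is fixed by `T`. To find one, walk up the order, each time moving to
a point `y` whose value `φ y` is within `ε` of the infimum of `φ` above the current point; everything
above `y` then lies within `ε` of `y`. With `ε = 1 / (n + 1)` the walk is Cauchy, its limit stays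
above every point of the walk because lower semicontinuity of `φ` makes the upper sets closed, and
anything above the limit is arbitrarily close to it.
-/

open Filter

section Caristi

variable {X : Type*} [PseudoMetricSpace X] {φ : X → ℝ}

def CaristiLE (φ : X → ℝ) (x y : X) : Prop :=
  dist x y ≤ φ x - φ y

theorem CaristiLE.refl (x : X) : CaristiLE φ x x := by
  simp [CaristiLE]

theorem CaristiLE.trans {x y z : X} (hxy : CaristiLE φ x y) (hyz : CaristiLE φ y z) :
    CaristiLE φ x z := by
  unfold CaristiLE at *
  linarith [dist_triangle x y z]

theorem isClosed_setOf_caristiLE (hφ : LowerSemicontinuous φ) (x : X) :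
    IsClosed {y | CaristiLE φ x y} := by
  simp only [CaristiLE, le_sub_iff_add_le]
  exact ((continuous_const.dist continuous_id).lowerSemicontinuous.add hφ).isClosed_preimage (φ x)

theorem exists_caristiLE_forall_dist_lt (hbd : BddBelow (Set.range φ)) (x : X) {ε : ℝ}
    (hε : 0 < ε) : ∃ y, CaristiLE φ x y ∧ ∀ w, CaristiLE φ y w → dist y w < ε := by
  set S := {y | CaristiLE φ x y}
  obtain ⟨_, ⟨y, hxy, rfl⟩, hy⟩ :=
    Real.lt_sInf_add_pos (s := φ '' S) ⟨φ x, x, CaristiLE.refl x, rfl⟩ hε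
  refine ⟨y, hxy, fun w hyw => ?_⟩
  have hw : sInf (φ '' S) ≤ φ w :=
    csInf_le (hbd.mono (Set.image_subset_range φ S)) ⟨w, hxy.trans hyw, rfl⟩
  unfold CaristiLE at hyw
  linarith

end Caristi

theorem exists_caristiLE_forall_caristiLE_eq {X : Type*} [MetricSpace X] [CompleteSpace X]
    {φ : X → ℝ} (hφ : LowerSemicontinuous φ) (hbd : BddBelow (Set.range φ)) (x : X) :
    ∃ z, CaristiLE φ x z ∧ ∀ y, CaristiLE φ z y → y = z := by
  choose next hnext hsmall using fun (n : ℕ) (x : X) =>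
    exists_caristiLE_forall_dist_lt hbd x (Nat.one_div_pos_of_nat (n := n))
  let u : ℕ → X := fun n => Nat.rec x next n
  have hmono {m n : ℕ} (h : m ≤ n) : CaristiLE φ (u m) (u n) :=
    Nat.le_induction (.refl _) (fun n _ ih => ih.trans (hnext n (u n))) n h
  have hu_small (n : ℕ) (w : X) (hw : CaristiLE φ (u (n + 1)) w) :
      dist (u (n + 1)) w < 1 / (n + 1) :=
    hsmall n (u n) w hw
  have hcauchy : CauchySeq u := Metric.cauchySeq_iff'.2 fun ε hε => by
    obtain ⟨N, hN⟩ := exists_nat_one_div_lt hε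
    refine ⟨N + 1, fun n hn => ?_⟩
    rw [dist_comm]
    exact (hu_small N _ (hmono hn)).trans hN
  obtain ⟨z, hz⟩ := cauchySeq_tendsto_of_complete hcauchy
  have hz_above (n : ℕ) : CaristiLE φ (u n) z :=
    (isClosed_setOf_caristiLE hφ (u n)).mem_of_tendsto hz
      ((eventually_ge_atTop n).mono fun m hm => hmono hm)
  refine ⟨z, hz_above 0, fun y hzy => eq_of_forall_dist_le fun ε hε => ?_⟩
  obtain ⟨N, hN⟩ := exists_nat_one_div_lt (half_pos hε)
  calc dist y z ≤ dist (u (N + 1)) y + dist (u (N + 1)) z := dist_triangle_left y z _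
    _ ≤ ε / 2 + ε / 2 := add_le_add
        (hu_small N y ((hz_above (N + 1)).trans hzy) |>.trans hN).le
        (hu_small N z (hz_above (N + 1)) |>.trans hN).le
    _ = ε := add_halves ε

/-- Caristi's fixed point theorem. -/
theorem caristi_fixed_point {X : Type*} [MetricSpace X] [CompleteSpace X] [Nonempty X]
    (φ : X → ℝ) (hlsc : LowerSemicontinuous φ) (hbd : BddBelow (Set.range φ))
    (T : X → X) (hT : ∀ x, dist x (T x) ≤ φ x - φ (T x)) :
    ∃ x, T x = x := by
  obtain ⟨z, -, hz_maximal⟩ :=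
    exists_caristiLE_forall_caristiLE_eq hlsc hbd (Classical.arbitrary X)
  exact ⟨z, hz_maximal (T z) (hT z)⟩
end

section
/- Let (X,d) be a complete metric space, η : [0,∞) → ℝ with η(0) = 0, and φ : X → ℝ lower semicontinuous. Assume there exist x₀ ∈ X and reals a ≥ 0, β with φ(x) ≥ a·d(x,x₀) + β for all x ∈ X. Suppose η is nonnegative and nondecreasing on W = {d(x,y) : x,y ∈ X}, and there exist c > 0 and ε > 0 such that η(t) ≥ c·t for all t ∈ {t ≥ 0 : η(t) ≤ ε} ∩ W. Then every mapping T : X → X satisfying η(d(x,Tx)) ≤ φ(x) − φ(Tx) for all x ∈ X has a fixed point. -/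
/-!
Caristi's argument, localised to a sublevel set of `φ`. Since `φ` is bounded below, pick `x₁`
with `φ x₁` within `ε` of `inf φ`. Wherever `φ x ≤ φ x₁`, the Caristi inequality forces
`η (d(x, Tx)) ≤ φ x - inf φ < ε`, so the growth condition upgrades it to
`c · d(x, Tx) ≤ φ x - φ (Tx)`. A weak Ekeland point `x*` of `φ / c` below `x₁` lies in this
sublevel set, and `T x*` lies in its cone `{y | d(x*, y) ≤ (φ x* - φ y) / c}`, which is `{x*}`.
-/

open Set Filter Topology Metric

section Caristi

variable {X : Type*} [MetricSpace X] {φ : X → ℝ} {x y : X}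

def caristiCone (φ : X → ℝ) (x : X) : Set X := {y | dist x y ≤ φ x - φ y}

theorem self_mem_caristiCone : x ∈ caristiCone φ x := by
  simp [caristiCone]

theorem le_of_mem_caristiCone (h : y ∈ caristiCone φ x) : φ y ≤ φ x := by
  have h' : dist x y ≤ φ x - φ y := h
  linarith [dist_nonneg (x := x) (y := y)]

theorem caristiCone_subset (h : y ∈ caristiCone φ x) : caristiCone φ y ⊆ caristiCone φ x :=
  fun z hz => show dist x z ≤ φ x - φ z by
    have hxy : dist x y ≤ φ x - φ y := h
    have hyz : dist y z ≤ φ y - φ z := hz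
    linarith [dist_triangle x y z]

theorem isClosed_caristiCone (hφ : LowerSemicontinuous φ) (x : X) :
    IsClosed (caristiCone φ x) := by
  have h : LowerSemicontinuous fun y => dist x y + φ y :=
    (continuous_const.dist continuous_id).lowerSemicontinuous.add hφ
  simpa only [caristiCone, le_sub_iff_add_le, preimage, mem_Iic] using h.isClosed_preimage (φ x)

/-- A near-minimiser of `φ` on the cone of `x` has a cone of radius `< δ`. -/
theorem exists_mem_caristiCone_subset_ball (hbdd : BddBelow (range φ)) (x : X) {δ : ℝ}
    (hδ : 0 < δ) : ∃ y ∈ caristiCone φ x, caristiCone φ y ⊆ ball y δ := by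
  set m := sInf (φ '' caristiCone φ x)
  obtain ⟨_, ⟨y, hy, rfl⟩, hym⟩ : ∃ t ∈ φ '' caristiCone φ x, t < m + δ :=
    exists_lt_of_csInf_lt ⟨φ x, x, self_mem_caristiCone, rfl⟩ (lt_add_of_pos_right m hδ)
  refine ⟨y, hy, fun z hz => ?_⟩
  have hmz : m ≤ φ z :=
    csInf_le (hbdd.mono (image_subset_range _ _)) ⟨z, caristiCone_subset hy hz, rfl⟩
  have hyz : dist y z ≤ φ y - φ z := hz
  rw [mem_ball, dist_comm]
  linarith

/-- Weak Ekeland principle: iterating the previous lemma with radii `1 / (n + 1)` gives nested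
closed cones whose diameters tend to `0`; their common point has a trivial cone. -/
theorem exists_mem_caristiCone_eq_singleton [CompleteSpace X] (hφ : LowerSemicontinuous φ)
    (hbdd : BddBelow (range φ)) (x₀ : X) :
    ∃ x ∈ caristiCone φ x₀, caristiCone φ x = {x} := by
  choose next hnext_mem hnext_ball using fun (n : ℕ) (v : X) =>
    exists_mem_caristiCone_subset_ball hbdd v (Nat.one_div_pos_of_nat (n := n))
  let u : ℕ → X := fun n => Nat.rec x₀ next n
  let s : ℕ → Set X := fun n => caristiCone φ (u (n + 1))
  have hs_anti : Antitone s :=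
    antitone_nat_of_succ_le fun n => caristiCone_subset (hnext_mem (n + 1) (u (n + 1)))
  have hs_ball (n : ℕ) : s n ⊆ ball (u (n + 1)) (1 / (n + 1)) := hnext_ball n (u n)
  have hs_bdd (n : ℕ) : Bornology.IsBounded (s n) := isBounded_ball.subset (hs_ball n)
  have hs_diam : Tendsto (fun n => diam (s n)) atTop (𝓝 0) := by
    have hbound : Tendsto (fun n : ℕ => 2 * (1 / ((n : ℝ) + 1))) atTop (𝓝 0) := by
      simpa using tendsto_one_div_add_atTop_nhds_zero_nat.const_mul (2 : ℝ)
    refine squeeze_zero (fun n => diam_nonneg) (fun n => ?_) hbound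
    exact (diam_mono (hs_ball n) isBounded_ball).trans (diam_ball (by positivity))
  obtain ⟨z, hz⟩ := nonempty_iInter_of_nonempty_biInter (fun n => isClosed_caristiCone hφ _)
    hs_bdd (fun N => ⟨u (N + 1), mem_iInter₂.2 fun n hn => hs_anti hn self_mem_caristiCone⟩)
    hs_diam
  rw [mem_iInter] at hz
  refine ⟨z, caristiCone_subset (hnext_mem 0 x₀) (hz 0),
    eq_singleton_iff_unique_mem.2 ⟨self_mem_caristiCone, fun y hy => ?_⟩⟩
  have hy_mem (n : ℕ) : y ∈ s n := caristiCone_subset (hz n) hy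
  have hdist : dist y z ≤ 0 :=
    ge_of_tendsto' hs_diam fun n => dist_le_diam_of_mem (hs_bdd n) (hy_mem n) (hz n)
  exact dist_le_zero.1 hdist

theorem exists_fixedPoint_of_caristi_on_sublevel [CompleteSpace X]
    (hφ : LowerSemicontinuous φ) (hbdd : BddBelow (range φ)) (x₀ : X) {c : ℝ} (hc : 0 < c)
    {T : X → X} (hT : ∀ x, φ x ≤ φ x₀ → c * dist x (T x) ≤ φ x - φ (T x)) :
    ∃ x, T x = x := by
  have hdiv_mono : Monotone fun t : ℝ => t / c := fun _ _ h => div_le_div_of_nonneg_right h hc.le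
  have hψ : LowerSemicontinuous fun x => φ x / c :=
    (continuous_id.div_const c).comp_lowerSemicontinuous hφ hdiv_mono
  have hψbdd : BddBelow (range fun x => φ x / c) := by
    obtain ⟨b, hb⟩ := hbdd
    exact ⟨b / c, forall_mem_range.2 fun x => hdiv_mono (hb (mem_range_self x))⟩
  obtain ⟨x, hx, hcone⟩ := exists_mem_caristiCone_eq_singleton hψ hψbdd x₀
  have hx_sub : φ x ≤ φ x₀ :=
    (div_le_div_iff_of_pos_right hc).1 (le_of_mem_caristiCone hx)
  have hTx : T x ∈ caristiCone (fun x => φ x / c) x := by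
    show dist x (T x) ≤ φ x / c - φ (T x) / c
    rw [← sub_div, le_div_iff₀ hc, mul_comm]
    exact hT x hx_sub
  exact ⟨x, mem_singleton_iff.1 (hcone ▸ hTx)⟩

end Caristi

theorem li_theorem1_case_i_general {X : Type*} [MetricSpace X] [CompleteSpace X] [Nonempty X]
    (η : ℝ → ℝ)
    (φ : X → ℝ) (hlsc : LowerSemicontinuous φ)
    (x₀ : X) (a β : ℝ) (ha : 0 ≤ a)
    (hφ : ∀ x, a * dist x x₀ + β ≤ φ x)
    (c ε : ℝ) (hc : 0 < c) (hε : 0 < ε)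
    (hgrow : ∀ t ∈ {t : ℝ | 0 ≤ t ∧ η t ≤ ε} ∩ {t : ℝ | ∃ x y : X, dist x y = t},
      c * t ≤ η t)
    (T : X → X) (hT : ∀ x, η (dist x (T x)) ≤ φ x - φ (T x)) :
    ∃ x, T x = x := by
  have hβ (x : X) : β ≤ φ x := by linarith [hφ x, mul_nonneg ha (dist_nonneg (x := x) (y := x₀))]
  have hbdd : BddBelow (range φ) := ⟨β, forall_mem_range.2 hβ⟩
  obtain ⟨x₁, hx₁⟩ : ∃ x, φ x < (⨅ x, φ x) + ε :=
    exists_lt_of_ciInf_lt (lt_add_of_pos_right _ hε)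
  refine exists_fixedPoint_of_caristi_on_sublevel hlsc hbdd x₁ hc fun x hx => ?_
  have hsmall : η (dist x (T x)) ≤ ε := by linarith [hT x, ciInf_le hbdd (T x)]
  exact (hgrow _ ⟨⟨dist_nonneg, hsmall⟩, x, T x, rfl⟩).trans (hT x)

/-- Li's Theorem 1, case (i). -/
theorem li_theorem1_case_i {X : Type*} [MetricSpace X] [CompleteSpace X] [Nonempty X]
    (η : ℝ → ℝ) (hη0 : η 0 = 0)
    (φ : X → ℝ) (hlsc : LowerSemicontinuous φ)
    (x₀ : X) (a β : ℝ) (ha : 0 ≤ a)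
    (hφ : ∀ x, a * dist x x₀ + β ≤ φ x)
    (hηnn : ∀ t ∈ {t : ℝ | ∃ x y : X, dist x y = t}, 0 ≤ η t)
    (hηmono : ∀ s ∈ {t : ℝ | ∃ x y : X, dist x y = t},
      ∀ t ∈ {t : ℝ | ∃ x y : X, dist x y = t}, s ≤ t → η s ≤ η t)
    (c ε : ℝ) (hc : 0 < c) (hε : 0 < ε)
    (hgrow : ∀ t ∈ {t : ℝ | 0 ≤ t ∧ η t ≤ ε} ∩ {t : ℝ | ∃ x y : X, dist x y = t},
      c * t ≤ η t)
    (T : X → X) (hT : ∀ x, η (dist x (T x)) ≤ φ x - φ (T x)) :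
    ∃ x, T x = x :=
  li_theorem1_case_i_general η φ hlsc x₀ a β ha hφ c ε hc hε hgrow T hT
end

section
/- Let (X,d) be a complete metric space, η : [0,∞) → ℝ with η(0) = 0, and φ : X → ℝ lower semicontinuous. Assume there exist x₀ ∈ X and reals a < 0, β with φ(x) ≥ a·d(x,x₀) + β for all x ∈ X. Suppose t ↦ η(t) + a·t is nonnegative and nondecreasing on W = {d(x,y) : x,y ∈ X}, and there exist c > 0 and ε > 0 such that η(t) + a·t ≥ c·t for all t ∈ {t ≥ 0 : η(t) + a·t ≤ ε} ∩ W. Then every mapping T : X → X satisfying η(d(x,Tx)) ≤ φ(x) − φ(Tx) for all x ∈ X has a fixed point. -/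
/-!
Tilting `φ` to `ψ x = φ x - a * dist x x₀` makes it bounded below by `β`, and the triangle
inequality turns the Caristi inequality of `T` into `η t + a t ≤ ψ x - ψ (T x)` with
`t = dist x (T x)`. On the sublevel set `ψ ≤ inf ψ + ε` the left side is at most `ε`, so the
growth hypothesis upgrades it to `c t ≤ ψ x - ψ (T x)`: an honest Caristi inequality there.
Ekeland's variational principle, started inside that sublevel set, yields a point `v` below
which nothing improves `ψ` by `c * dist v ·`; since `T v` would be such a point, `T v = v`.
-/

open Filter Topology Function Set

section Ekeland

variable {X : Type*} [MetricSpace X] {ψ : X → ℝ} {δ : ℝ}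

variable (ψ δ) in
def ekelandSet (x : X) : Set X := {y | ψ y + δ * dist x y ≤ ψ x}

lemma mem_ekelandSet_self (x : X) : x ∈ ekelandSet ψ δ x := by
  simp [ekelandSet]

lemma ekelandSet_subset (hδ : 0 ≤ δ) {x y : X} (hy : y ∈ ekelandSet ψ δ x) :
    ekelandSet ψ δ y ⊆ ekelandSet ψ δ x := by
  intro z hz
  have htri : δ * dist x z ≤ δ * dist x y + δ * dist y z := by
    rw [← mul_add]; exact mul_le_mul_of_nonneg_left (dist_triangle x y z) hδ
  have hyx : ψ y + δ * dist x y ≤ ψ x := hy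
  have hzy : ψ z + δ * dist y z ≤ ψ y := hz
  show ψ z + δ * dist x z ≤ ψ x
  linarith

lemma LowerSemicontinuous.isClosed_ekelandSet (hψ : LowerSemicontinuous ψ) (x : X) :
    IsClosed (ekelandSet ψ δ x) :=
  (hψ.add (continuous_const.mul (continuous_const.dist continuous_id)).lowerSemicontinuous
    ).isClosed_preimage (ψ x)

/-- Take `y` with `ψ y` within `r` of the infimum of `ψ` on `ekelandSet ψ δ x`, which contains
`ekelandSet ψ δ y`. -/
lemma exists_mem_ekelandSet_forall_mul_dist_le (hδ : 0 ≤ δ) (hbdd : BddBelow (range ψ)) (x : X)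
    {r : ℝ} (hr : 0 < r) :
    ∃ y ∈ ekelandSet ψ δ x, ∀ z ∈ ekelandSet ψ δ y, δ * dist y z ≤ r := by
  obtain ⟨_, ⟨y, hy, rfl⟩, hlt⟩ :=
    Real.lt_sInf_add_pos (s := ψ '' ekelandSet ψ δ x)
      ⟨ψ x, x, mem_ekelandSet_self x, rfl⟩ hr
  refine ⟨y, hy, fun z hz => ?_⟩
  have hinf : sInf (ψ '' ekelandSet ψ δ x) ≤ ψ z :=
    csInf_le (hbdd.mono (image_subset_range _ _)) ⟨z, ekelandSet_subset hδ hy hz, rfl⟩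
  have hz' : ψ z + δ * dist y z ≤ ψ y := hz
  linarith

theorem LowerSemicontinuous.exists_ekelandSet_eq_singleton [CompleteSpace X]
    (hψ : LowerSemicontinuous ψ) (hbdd : BddBelow (range ψ)) (hδ : 0 < δ) (u : X) :
    ∃ v ∈ ekelandSet ψ δ u, ekelandSet ψ δ v = {v} := by
  choose f hf_mem hf_le using fun (x : X) (n : ℕ) =>
    exists_mem_ekelandSet_forall_mul_dist_le hδ.le hbdd x (pow_pos one_half_pos n)
  -- The closed sets `ekelandSet ψ δ (x n)` are nested and lie within `r n` of `x n`, so they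
  -- shrink to the limit `v`; hence so does `ekelandSet ψ δ v`, which lies inside all of them.
  let x : ℕ → X := fun n => Nat.rec (f u 0) (fun n xn => f xn (n + 1)) n
  let r : ℕ → ℝ := fun n => (1 / 2) ^ n / δ
  have hr : Tendsto r atTop (𝓝 0) := by
    simpa only [zero_div] using
      (tendsto_pow_atTop_nhds_zero_of_lt_one (by norm_num : (0 : ℝ) ≤ 1 / 2)
        (by norm_num)).div_const δ
  have hdist : ∀ n, ∀ z ∈ ekelandSet ψ δ (x n), dist (x n) z ≤ r n := by
    intro n z hz
    rw [le_div_iff₀ hδ, mul_comm]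
    cases n with
    | zero => exact hf_le u 0 z hz
    | succ n => exact hf_le (x n) (n + 1) z hz
  have hanti : Antitone fun n => ekelandSet ψ δ (x n) :=
    antitone_nat_of_succ_le fun n => ekelandSet_subset hδ.le (hf_mem (x n) (n + 1))
  have hmem : ∀ {n m}, n ≤ m → x m ∈ ekelandSet ψ δ (x n) := fun h =>
    hanti h (mem_ekelandSet_self _)
  obtain ⟨v, hv⟩ := cauchySeq_tendsto_of_complete <|
    cauchySeq_of_le_tendsto_0' r (fun n _ h => hdist n _ (hmem h)) hr
  have hv_mem : ∀ n, v ∈ ekelandSet ψ δ (x n) := fun n =>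
    (hψ.isClosed_ekelandSet (x n)).mem_of_tendsto hv (eventually_atTop.2 ⟨n, fun _ => hmem⟩)
  refine ⟨v, ekelandSet_subset hδ.le (hf_mem u 0) (hv_mem 0),
    eq_singleton_iff_unique_mem.2 ⟨mem_ekelandSet_self v, fun y hy => ?_⟩⟩
  have hxy : Tendsto x atTop (𝓝 y) := tendsto_iff_dist_tendsto_zero.2 <|
    squeeze_zero (fun _ => dist_nonneg)
      (fun n => hdist n y (ekelandSet_subset hδ.le (hv_mem n) hy)) hr
  exact tendsto_nhds_unique hxy hv

theorem LowerSemicontinuous.exists_isFixedPt_of_caristi [CompleteSpace X]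
    (hψ : LowerSemicontinuous ψ) (hbdd : BddBelow (range ψ)) (hδ : 0 < δ) {T : X → X} (u : X)
    (hT : ∀ x, ψ x ≤ ψ u → δ * dist x (T x) ≤ ψ x - ψ (T x)) :
    ∃ x, IsFixedPt T x := by
  obtain ⟨v, hvu, hv⟩ := hψ.exists_ekelandSet_eq_singleton hbdd hδ u
  have hvu' : ψ v + δ * dist u v ≤ ψ u := hvu
  have hψv : ψ v ≤ ψ u := by nlinarith [dist_nonneg (x := u) (y := v)]
  have hTv : T v ∈ ekelandSet ψ δ v := by
    show ψ (T v) + δ * dist v (T v) ≤ ψ v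
    linarith [hT v hψv]
  rw [hv] at hTv
  exact ⟨v, hTv⟩

end Ekeland

theorem li_theorem1_case_ii_general {X : Type*} [MetricSpace X] [CompleteSpace X]
    (η : ℝ → ℝ)
    (φ : X → ℝ) (hlsc : LowerSemicontinuous φ)
    (x₀ : X) (a β : ℝ) (ha : a < 0)
    (hφ : ∀ x, a * dist x x₀ + β ≤ φ x)
    (c ε : ℝ) (hc : 0 < c) (hε : 0 < ε)
    (hgrow : ∀ t ∈ {t : ℝ | 0 ≤ t ∧ η t + a * t ≤ ε} ∩ {t : ℝ | ∃ x y : X, dist x y = t},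
      c * t ≤ η t + a * t)
    (T : X → X) (hT : ∀ x, η (dist x (T x)) ≤ φ x - φ (T x)) :
    ∃ x, T x = x := by
  let ψ : X → ℝ := fun x => φ x + -a * dist x x₀
  have hψ : LowerSemicontinuous ψ :=
    hlsc.add (continuous_const.mul (continuous_id.dist continuous_const)).lowerSemicontinuous
  have hbdd : BddBelow (range ψ) := ⟨β, by rintro _ ⟨x, rfl⟩; linarith [hφ x]⟩
  have hcaristi : ∀ x, η (dist x (T x)) + a * dist x (T x) ≤ ψ x - ψ (T x) := by
    intro x
    have htri : a * (dist (T x) x + dist x x₀) ≤ a * dist (T x) x₀ :=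
      mul_le_mul_of_nonpos_left (dist_triangle (T x) x x₀) ha.le
    rw [dist_comm (T x) x] at htri
    linarith [hT x]
  have : Nonempty X := ⟨x₀⟩
  obtain ⟨u, hu⟩ := exists_lt_of_ciInf_lt (lt_add_of_pos_right (⨅ x, ψ x) hε)
  refine hψ.exists_isFixedPt_of_caristi hbdd hc u fun x hx => ?_
  have hsmall : η (dist x (T x)) + a * dist x (T x) ≤ ε := by
    linarith [hcaristi x, ciInf_le hbdd (T x)]
  exact (hgrow _ ⟨⟨dist_nonneg, hsmall⟩, x, T x, rfl⟩).trans (hcaristi x)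

/-- Li's Theorem 1, case (ii). -/
theorem li_theorem1_case_ii {X : Type*} [MetricSpace X] [CompleteSpace X] [Nonempty X]
    (η : ℝ → ℝ) (hη0 : η 0 = 0)
    (φ : X → ℝ) (hlsc : LowerSemicontinuous φ)
    (x₀ : X) (a β : ℝ) (ha : a < 0)
    (hφ : ∀ x, a * dist x x₀ + β ≤ φ x)
    (hnn : ∀ t ∈ {t : ℝ | ∃ x y : X, dist x y = t}, 0 ≤ η t + a * t)
    (hmono : ∀ s ∈ {t : ℝ | ∃ x y : X, dist x y = t},
      ∀ t ∈ {t : ℝ | ∃ x y : X, dist x y = t}, s ≤ t → η s + a * s ≤ η t + a * t)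
    (c ε : ℝ) (hc : 0 < c) (hε : 0 < ε)
    (hgrow : ∀ t ∈ {t : ℝ | 0 ≤ t ∧ η t + a * t ≤ ε} ∩ {t : ℝ | ∃ x y : X, dist x y = t},
      c * t ≤ η t + a * t)
    (T : X → X) (hT : ∀ x, η (dist x (T x)) ≤ φ x - φ (T x)) :
    ∃ x, T x = x :=
  li_theorem1_case_ii_general η φ hlsc x₀ a β ha hφ c ε hc hε hgrow T hT
end

section
/- Let (X,d) be a complete metric space, η : [0,∞) → [0,∞) with η(0) = 0, and φ : X → ℝ lower semicontinuous and bounded below on every bounded subset of X. Assume there exist x₀ ∈ X and a real a < 0 with liminf_{d(x,x₀)→∞} φ(x)/d(x,x₀) > a. Suppose t ↦ η(t) + a·t is nonnegative and nondecreasing on [0,∞), and liminf_{t→0⁺} η(t)/t ≥ −a. Then every mapping T : X → X satisfying η(d(x,Tx)) ≤ φ(x) − φ(Tx) for all x ∈ X has a fixed point. -/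
/-!
Since `η t ≥ -a t`, the map `T` satisfies Caristi's condition `dist x (T x) ≤ ψ x - ψ (T x)` for
`ψ = φ / (-a)`. Caristi's theorem only needs `ψ` to be bounded below on the set of points `y` with
`dist x₀ y ≤ ψ x₀ - ψ y`, and the growth condition on `φ` at infinity makes that set bounded.
Caristi's theorem itself follows from Ekeland's principle: almost-minimizers of `ψ` over the nested
sets `{y | dist xₙ y ≤ ψ xₙ - ψ y}` form a Cauchy sequence whose limit `z` is the only point of its
own set, and `T z` lies in that set.
-/

open Filter Topology Metric Set

section Caristi

variable {X : Type*} [MetricSpace X]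

/-- The points below `x` in the Brøndsted order `x ≼ y ↔ dist x y ≤ φ x - φ y`. -/
def caristiSet (φ : X → ℝ) (x : X) : Set X := {y | dist x y ≤ φ x - φ y}

variable {φ : X → ℝ} {x y : X}

theorem mem_caristiSet : y ∈ caristiSet φ x ↔ dist x y ≤ φ x - φ y := Iff.rfl

theorem mem_caristiSet_self : x ∈ caristiSet φ x := by simp [mem_caristiSet]

theorem le_of_mem_caristiSet (h : y ∈ caristiSet φ x) : φ y ≤ φ x := by
  linarith [mem_caristiSet.1 h, dist_nonneg (x := x) (y := y)]

theorem caristiSet_subset_of_mem (h : y ∈ caristiSet φ x) : caristiSet φ y ⊆ caristiSet φ x :=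
  fun w hw =>
  calc dist x w ≤ dist x y + dist y w := dist_triangle x y w
    _ ≤ (φ x - φ y) + (φ y - φ w) := add_le_add h hw
    _ = φ x - φ w := by ring

theorem mem_caristiSet_of_le {u : ℕ → X} (hstep : ∀ n, u (n + 1) ∈ caristiSet φ (u n))
    {n m : ℕ} (hnm : n ≤ m) : u m ∈ caristiSet φ (u n) :=
  antitone_nat_of_succ_le (f := fun k => caristiSet φ (u k))
    (fun k => caristiSet_subset_of_mem (hstep k)) hnm mem_caristiSet_self

theorem exists_mem_caristiSet_forall_lt_add (hbdd : BddBelow (φ '' caristiSet φ x)) {ε : ℝ}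
    (hε : 0 < ε) : ∃ y ∈ caristiSet φ x, ∀ w ∈ caristiSet φ x, φ y < φ w + ε := by
  obtain ⟨_, ⟨y, hy, rfl⟩, hlt⟩ :=
    Real.lt_sInf_add_pos ⟨φ x, mem_image_of_mem φ mem_caristiSet_self⟩ hε
  exact ⟨y, hy, fun w hw =>
    hlt.trans_le (by gcongr; exact csInf_le hbdd (mem_image_of_mem φ hw))⟩

theorem exists_seq_succ_mem_caristiSet (hbdd : BddBelow (φ '' caristiSet φ x)) :
    ∃ u : ℕ → X, u 0 = x ∧ ∀ n, u (n + 1) ∈ caristiSet φ (u n) ∧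
      ∀ w ∈ caristiSet φ (u n), φ (u (n + 1)) < φ w + 1 / (n + 1) := by
  have step : ∀ (n : ℕ) (p : caristiSet φ x), ∃ q : caristiSet φ x,
      (q : X) ∈ caristiSet φ p ∧ ∀ w ∈ caristiSet φ p, φ q < φ w + 1 / (n + 1) := by
    rintro n ⟨p, hp⟩
    obtain ⟨q, hq, hmin⟩ := exists_mem_caristiSet_forall_lt_add
      (hbdd.mono (image_mono (caristiSet_subset_of_mem hp))) Nat.one_div_pos_of_nat
    exact ⟨⟨q, caristiSet_subset_of_mem hp hq⟩, hq, hmin⟩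
  choose next hnext using step
  let u : ℕ → caristiSet φ x := fun n =>
    Nat.rec (motive := fun _ => caristiSet φ x) ⟨x, mem_caristiSet_self⟩ next n
  exact ⟨fun n => (u n : X), rfl, fun n => hnext n (u n)⟩

theorem LowerSemicontinuous.le_of_tendsto {ι : Type*} {l : Filter ι} [l.NeBot] {f : X → ℝ}
    (hf : LowerSemicontinuous f) {u : ι → X} {z : X} {L : ℝ} (hu : Tendsto u l (𝓝 z))
    (hfu : Tendsto (f ∘ u) l (𝓝 L)) : f z ≤ L :=
  le_of_forall_lt_imp_le_of_dense fun _ hy =>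
    ge_of_tendsto hfu ((hu.eventually (hf z _ hy)).mono fun _ h => h.le)

theorem isBounded_caristiSet {b r : ℝ} (hb : -1 < b)
    (hgrowth : ∀ y, r ≤ dist y x → b * dist y x ≤ φ y) : Bornology.IsBounded (caristiSet φ x) := by
  refine isBounded_closedBall (x := x) (r := max r (φ x / (1 + b))) |>.subset fun y hy => ?_
  rw [mem_closedBall]
  rcases le_or_gt (dist y x) r with hle | hlt
  · exact hle.trans (le_max_left _ _)
  · have hy' : dist y x ≤ φ x - φ y := dist_comm x y ▸ hy
    have : dist y x ≤ φ x / (1 + b) := by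
      rw [le_div_iff₀ (by linarith)]
      linarith [hgrowth y hlt.le]
    exact this.trans (le_max_right _ _)

variable [CompleteSpace X]

theorem exists_forall_mem_caristiSet (hφ : LowerSemicontinuous φ) {u : ℕ → X}
    (hstep : ∀ n, u (n + 1) ∈ caristiSet φ (u n)) (hbdd : BddBelow (range (φ ∘ u))) :
    ∃ z, ∀ n, z ∈ caristiSet φ (u n) := by
  have hmem {n m : ℕ} (h : n ≤ m) := mem_caristiSet_of_le hstep h
  set L := ⨅ n, φ (u n)
  have hL : Tendsto (φ ∘ u) atTop (𝓝 L) :=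
    tendsto_atTop_ciInf (fun _ _ h => le_of_mem_caristiSet (φ := φ) (hmem h)) hbdd
  have hdist {n m : ℕ} (h : n ≤ m) : dist (u n) (u m) ≤ φ (u n) - L := by
    have hLm : L ≤ φ (u m) := ciInf_le hbdd m
    linarith [mem_caristiSet.1 (hmem h)]
  have hcauchy : CauchySeq u :=
    cauchySeq_of_le_tendsto_0' (fun n => φ (u n) - L) (fun _ _ h => hdist h)
      (by simpa using hL.sub_const L)
  obtain ⟨z, hz⟩ := cauchySeq_tendsto_of_complete hcauchy
  refine ⟨z, fun n => ?_⟩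
  have hdist_z : dist (u n) z ≤ φ (u n) - L :=
    le_of_tendsto (tendsto_const_nhds.dist hz) (eventually_atTop.2 ⟨n, fun _ h => hdist h⟩)
  rw [mem_caristiSet]
  linarith [hφ.le_of_tendsto hz hL]

/-- Ekeland's variational principle (weak form), started at `x`. -/
theorem exists_mem_caristiSet_eq_singleton (hφ : LowerSemicontinuous φ)
    (hbdd : BddBelow (φ '' caristiSet φ x)) : ∃ z ∈ caristiSet φ x, caristiSet φ z = {z} := by
  obtain ⟨u, rfl, hu⟩ := exists_seq_succ_mem_caristiSet hbdd
  have hstep (n : ℕ) := (hu n).1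
  obtain ⟨z, hz⟩ := exists_forall_mem_caristiSet hφ hstep
    (hbdd.mono (range_subset_iff.2 fun n =>
      mem_image_of_mem φ (mem_caristiSet_of_le hstep n.zero_le)))
  refine ⟨z, hz 0, eq_singleton_iff_unique_mem.2 ⟨mem_caristiSet_self, fun y hy => ?_⟩⟩
  -- `φ z ≤ φ (u (n + 1)) < φ y + 1 / (n + 1)` because `y ∈ caristiSet φ z ⊆ caristiSet φ (u n)`.
  have hφ_le : φ z - φ y ≤ 0 :=
    ge_of_tendsto' tendsto_one_div_add_atTop_nhds_zero_nat fun n => by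
      linarith [le_of_mem_caristiSet (hz (n + 1)),
        (hu n).2 y (caristiSet_subset_of_mem (hz n) hy)]
  exact (dist_le_zero.1 ((mem_caristiSet.1 hy).trans hφ_le)).symm

/-- Caristi's fixed point theorem. -/
theorem exists_fixedPoint_of_dist_le_sub (hφ : LowerSemicontinuous φ)
    (hbdd : BddBelow (φ '' caristiSet φ x)) {T : X → X}
    (hT : ∀ y, dist y (T y) ≤ φ y - φ (T y)) : ∃ z, T z = z := by
  obtain ⟨z, -, hz⟩ := exists_mem_caristiSet_eq_singleton hφ hbdd
  exact ⟨z, (hz.subset (hT z) : T z ∈ ({z} : Set X))⟩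

end Caristi

theorem li_theorem2_case_ii_general {X : Type*} [MetricSpace X] [CompleteSpace X]
    (η : ℝ → ℝ)
    (φ : X → ℝ) (hlsc : LowerSemicontinuous φ)
    (hbdd : ∀ S : Set X, Bornology.IsBounded S → BddBelow (φ '' S))
    (x₀ : X) (a : ℝ) (ha : a < 0)
    (hliminf : ∃ b > a, ∃ r > (0 : ℝ), ∀ x : X, r ≤ dist x x₀ → b ≤ φ x / dist x x₀)
    (hnn : ∀ t : ℝ, 0 ≤ t → 0 ≤ η t + a * t)
    (T : X → X) (hT : ∀ x, η (dist x (T x)) ≤ φ x - φ (T x)) :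
    ∃ x, T x = x := by
  obtain ⟨b, hba, r, hr, hgrowth⟩ := hliminf
  have hc : 0 < -a := neg_pos.2 ha
  set ψ : X → ℝ := fun x => φ x / -a
  have hψT : ∀ x, dist x (T x) ≤ ψ x - ψ (T x) := fun x => by
    rw [← sub_div, le_div_iff₀ hc]
    linarith [hnn _ (dist_nonneg (x := x) (y := T x)), hT x]
  have hψ_growth : ∀ x, r ≤ dist x x₀ → b / -a * dist x x₀ ≤ ψ x := fun x hx => by
    rw [div_mul_eq_mul_div]
    exact div_le_div_of_nonneg_right ((le_div_iff₀ (hr.trans_le hx)).1 (hgrowth x hx)) hc.le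
  have hbounded : Bornology.IsBounded (caristiSet ψ x₀) :=
    isBounded_caristiSet (by rwa [lt_div_iff₀ hc, neg_one_mul, neg_neg]) hψ_growth
  have hψ_lsc : LowerSemicontinuous ψ :=
    (continuous_id.div_const (-a)).comp_lowerSemicontinuous hlsc
      (monotone_div_right_of_nonneg hc.le)
  have hψ_bdd : BddBelow (ψ '' caristiSet ψ x₀) := by
    rw [← image_image (· / -a) φ]
    exact (monotone_div_right_of_nonneg hc.le).map_bddBelow (hbdd _ hbounded)
  exact exists_fixedPoint_of_dist_le_sub hψ_lsc hψ_bdd hψT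

/-- Li's Theorem 2, case (ii). -/
theorem li_theorem2_case_ii {X : Type*} [MetricSpace X] [CompleteSpace X] [Nonempty X]
    (η : ℝ → ℝ) (hη0 : η 0 = 0) (hηnn' : ∀ t, 0 ≤ t → 0 ≤ η t)
    (φ : X → ℝ) (hlsc : LowerSemicontinuous φ)
    (hbdd : ∀ S : Set X, Bornology.IsBounded S → BddBelow (φ '' S))
    (x₀ : X) (a : ℝ) (ha : a < 0)
    (hliminf : ∃ b > a, ∃ r > (0 : ℝ), ∀ x : X, r ≤ dist x x₀ → b ≤ φ x / dist x x₀)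
    (hnn : ∀ t : ℝ, 0 ≤ t → 0 ≤ η t + a * t)
    (hmono : ∀ s t : ℝ, 0 ≤ s → s ≤ t → η s + a * s ≤ η t + a * t)
    (hliminfη : ∀ c : ℝ, c < -a → ∃ δ > (0 : ℝ), ∀ t : ℝ, 0 < t → t < δ → c * t ≤ η t)
    (T : X → X) (hT : ∀ x, η (dist x (T x)) ≤ φ x - φ (T x)) :
    ∃ x, T x = x :=
  li_theorem2_case_ii_general η φ hlsc hbdd x₀ a ha hliminf hnn T hT
end

section
/- Caristi's fixed point theorem implies Li's Theorem 1, case (i): assuming that for every complete metric space X, every lower semicontinuous bounded-below ψ : X → ℝ, and every T : X → X with d(x,Tx) ≤ ψ(x) − ψ(Tx) for all x there is a fixed point of T, one can deduce that under the hypotheses of Theorem 1(i) (η(0)=0, φ lsc with φ(x) ≥ a·d(x,x₀)+β for some a ≥ 0, η nonnegative and nondecreasing on W = {d(x,y) : x,y ∈ X}, and η(t) ≥ c·t on {t ≥ 0 : η(t) ≤ ε} ∩ W for some c, ε > 0), every T with η(d(x,Tx)) ≤ φ(x) − φ(Tx) has a fixed point. -/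
/-!
On the sublevel set `{x | φ x ≤ φ x₁}`, where `φ x₁ < inf φ + ε`, the drop `φ x - φ (T x)` is
less than `ε`, so the linear growth of `η` gives `c · d(x, T x) ≤ φ x - φ (T x)`. This sublevel
set is closed, hence complete, and invariant under `T` because `η ≥ 0`; so Caristi's theorem
applied to `T` restricted to it, with `ψ = φ / c`, yields a fixed point.
-/

universe u

open Set

def CaristiPrinciple : Prop :=
  ∀ (Y : Type u) [MetricSpace Y] [CompleteSpace Y] [Nonempty Y]
    (ψ : Y → ℝ), LowerSemicontinuous ψ → BddBelow (range ψ) →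
    ∀ S : Y → Y, (∀ y, dist y (S y) ≤ ψ y - ψ (S y)) → ∃ y, S y = y

namespace CaristiPrinciple

variable {X : Type u} [MetricSpace X] [CompleteSpace X] {φ : X → ℝ} {T : X → X} {c : ℝ}

theorem exists_fixedPoint_of_mul_dist_le [Nonempty X] (caristi : CaristiPrinciple.{u})
    (hlsc : LowerSemicontinuous φ) (hbdd : BddBelow (range φ)) (hc : 0 < c)
    (hT : ∀ x, c * dist x (T x) ≤ φ x - φ (T x)) : ∃ x, T x = x := by
  have hmono : Monotone fun t : ℝ => t / c := fun _ _ h => div_le_div_of_nonneg_right h hc.le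
  refine caristi X (fun x => φ x / c) ?_ ?_ T fun x => ?_
  · exact (continuous_id.div_const c).comp_lowerSemicontinuous hlsc hmono
  · exact range_comp (· / c) φ ▸ hmono.map_bddBelow hbdd
  · rw [← sub_div, le_div_iff₀ hc]
    linarith [hT x]

theorem exists_fixedPoint_of_isClosed_mapsTo (caristi : CaristiPrinciple.{u}) {s : Set X}
    (hs : IsClosed s) (hne : s.Nonempty) (hTs : MapsTo T s s) (hlsc : LowerSemicontinuous φ)
    (hbdd : BddBelow (φ '' s)) (hc : 0 < c)
    (hT : ∀ x ∈ s, c * dist x (T x) ≤ φ x - φ (T x)) : ∃ x ∈ s, T x = x := by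
  have : CompleteSpace s := hs.completeSpace_coe
  have : Nonempty s := hne.to_subtype
  obtain ⟨y, hy⟩ := exists_fixedPoint_of_mul_dist_le caristi (T := hTs.restrict)
    (hlsc.comp continuous_subtype_val) (by rwa [range_comp, Subtype.range_coe]) hc
    fun y => hT y y.2
  exact ⟨y, y.2, congrArg Subtype.val hy⟩

end CaristiPrinciple

theorem caristi_implies_li_theorem1_i_general
    (caristi : ∀ (Y : Type u) [MetricSpace Y] [CompleteSpace Y] [Nonempty Y]
      (ψ : Y → ℝ), LowerSemicontinuous ψ → BddBelow (Set.range ψ) →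
      ∀ S : Y → Y, (∀ y, dist y (S y) ≤ ψ y - ψ (S y)) → ∃ y, S y = y)
    {X : Type u} [MetricSpace X] [CompleteSpace X] [Nonempty X]
    (η : ℝ → ℝ)
    (φ : X → ℝ) (hlsc : LowerSemicontinuous φ)
    (x₀ : X) (a β : ℝ) (ha : 0 ≤ a)
    (hφ : ∀ x, a * dist x x₀ + β ≤ φ x)
    (hηnn : ∀ t ∈ {t : ℝ | ∃ x y : X, dist x y = t}, 0 ≤ η t)
    (c ε : ℝ) (hc : 0 < c) (hε : 0 < ε)
    (hgrow : ∀ t ∈ {t : ℝ | 0 ≤ t ∧ η t ≤ ε} ∩ {t : ℝ | ∃ x y : X, dist x y = t},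
      c * t ≤ η t)
    (T : X → X) (hT : ∀ x, η (dist x (T x)) ≤ φ x - φ (T x)) :
    ∃ x, T x = x := by
  have hbdd : BddBelow (range φ) :=
    ⟨β, forall_mem_range.2 fun x => by
      linarith [hφ x, mul_nonneg ha (dist_nonneg (x := x) (y := x₀))]⟩
  have hdist_mem : ∀ x, dist x (T x) ∈ {t : ℝ | ∃ x y : X, dist x y = t} := fun x => ⟨x, T x, rfl⟩
  have hdecr : ∀ x, φ (T x) ≤ φ x := fun x => by linarith [hT x, hηnn _ (hdist_mem x)]
  obtain ⟨x₁, hx₁⟩ := exists_lt_of_ciInf_lt (lt_add_of_pos_right (⨅ x, φ x) hε)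
  have hlin : ∀ x ∈ φ ⁻¹' Iic (φ x₁), c * dist x (T x) ≤ φ x - φ (T x) := by
    intro x (hx : φ x ≤ φ x₁)
    have hsmall : η (dist x (T x)) ≤ ε := by linarith [hT x, ciInf_le hbdd (T x)]
    linarith [hT x, hgrow _ ⟨⟨dist_nonneg, hsmall⟩, hdist_mem x⟩]
  obtain ⟨x, -, hx⟩ := CaristiPrinciple.exists_fixedPoint_of_isClosed_mapsTo caristi
    (hlsc.isClosed_preimage (φ x₁)) ⟨x₁, le_refl (φ x₁)⟩ (fun x hx => (hdecr x).trans hx) hlsc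
    (hbdd.mono (image_subset_range _ _)) hc hlin
  exact ⟨x, hx⟩

/-- Caristi's fixed point theorem implies Li's Theorem 1, case (i). -/
theorem caristi_implies_li_theorem1_i
    (caristi : ∀ (Y : Type u) [MetricSpace Y] [CompleteSpace Y] [Nonempty Y]
      (ψ : Y → ℝ), LowerSemicontinuous ψ → BddBelow (Set.range ψ) →
      ∀ S : Y → Y, (∀ y, dist y (S y) ≤ ψ y - ψ (S y)) → ∃ y, S y = y)
    {X : Type u} [MetricSpace X] [CompleteSpace X] [Nonempty X]
    (η : ℝ → ℝ) (hη0 : η 0 = 0)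
    (φ : X → ℝ) (hlsc : LowerSemicontinuous φ)
    (x₀ : X) (a β : ℝ) (ha : 0 ≤ a)
    (hφ : ∀ x, a * dist x x₀ + β ≤ φ x)
    (hηnn : ∀ t ∈ {t : ℝ | ∃ x y : X, dist x y = t}, 0 ≤ η t)
    (hηmono : ∀ s ∈ {t : ℝ | ∃ x y : X, dist x y = t},
      ∀ t ∈ {t : ℝ | ∃ x y : X, dist x y = t}, s ≤ t → η s ≤ η t)
    (c ε : ℝ) (hc : 0 < c) (hε : 0 < ε)
    (hgrow : ∀ t ∈ {t : ℝ | 0 ≤ t ∧ η t ≤ ε} ∩ {t : ℝ | ∃ x y : X, dist x y = t},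
      c * t ≤ η t)
    (T : X → X) (hT : ∀ x, η (dist x (T x)) ≤ φ x - φ (T x)) :
    ∃ x, T x = x :=
  caristi_implies_li_theorem1_i_general caristi η φ hlsc x₀ a β ha hφ hηnn c ε hc hε hgrow T hT
end

section
/- There is no fixed point in general for Caristi type mappings with η(t) = t²: there exist a complete metric space (X,d), a lower semicontinuous bounded-below function φ : X → ℝ, and a fixed-point-free map T : X → X such that (d(x,Tx))² ≤ φ(x) − φ(Tx) for all x ∈ X. Concretely, let s_n = ∑_{k<n} 1/(k+1) for n ∈ ℕ, and let X = {s_n : n ∈ ℕ} ⊆ ℝ with the usual metric; X is closed in ℝ because s_n diverges, hence complete. Define T(s_n) = s_{n+1} and φ(s_n) = ∑_{k≥n} 1/(k+1)². Then φ is lower semicontinuous and bounded below by 0, T has no fixed point, and d(s_n, T s_n)² = 1/(n+1)² = φ(s_n) − φ(s_{n+1}) for all n. -/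
open Filter Set Topology

namespace KirkCE

/-- Partial sums of the harmonic series. -/
noncomputable def s (n : ℕ) : ℝ := ∑ k ∈ Finset.range n, (1 / (k + 1) : ℝ)

lemma s_succ (n : ℕ) : s (n + 1) = s n + 1 / (n + 1) := by
  simp [s, Finset.sum_range_succ]

lemma s_strictMono : StrictMono s :=
  strictMono_nat_of_lt_succ fun n => by
    rw [s_succ]; have : (0:ℝ) < 1 / (n+1) := by positivity
    linarith

lemma s_tendsto : Tendsto s atTop atTop :=
  Real.tendsto_sum_range_one_div_nat_succ_atTop

lemma s_sep {m n : ℕ} (h : m ≠ n) : 1 / (n + 1 : ℝ) ≤ |s m - s n| := by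
  rcases h.lt_or_gt with hmn | hnm
  · have h1 : s (m + 1) ≤ s n := s_strictMono.monotone hmn
    have h2 : s m + 1 / (m + 1) ≤ s n := by rwa [s_succ] at h1
    have h3 : (1:ℝ) / (n+1) ≤ 1 / (m+1) := by
      apply one_div_le_one_div_of_le (by positivity)
      have : (m:ℝ) ≤ n := by exact_mod_cast hmn.le
      linarith
    have hp : (0:ℝ) < 1 / (m+1) := by positivity
    rw [abs_sub_comm, abs_of_nonneg (by linarith)]
    linarith
  · have h1 : s (n + 1) ≤ s m := s_strictMono.monotone hnm
    rw [s_succ] at h1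
    have hp : (0:ℝ) < 1 / (n+1) := by positivity
    rw [abs_of_nonneg (by linarith)]
    linarith

lemma s_injective : Function.Injective s := s_strictMono.injective

/-- The range of `s` is a closed subset of `ℝ`. -/
lemma isClosed_range_s : IsClosed (Set.range s) := by
  rw [← isOpen_compl_iff, isOpen_iff_mem_nhds]
  intro x hx
  rcases lt_or_ge x (s 0) with h0 | h0
  · refine mem_of_superset (Iio_mem_nhds h0) ?_
    rintro y hy ⟨n, rfl⟩
    exact absurd (s_strictMono.monotone (Nat.zero_le n)) (not_le.mpr hy)
  · have hex : ∃ n, x < s n := by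
      rcases (tendsto_atTop.mp s_tendsto (x + 1)).exists with ⟨n, hn⟩
      exact ⟨n, by linarith⟩
    set N := Nat.find hex with hN
    have hNlt : x < s N := Nat.find_spec hex
    have hN0 : N ≠ 0 := by
      intro h
      rw [h] at hNlt; linarith
    obtain ⟨m, hNm⟩ := Nat.exists_eq_succ_of_ne_zero hN0
    rw [hNm] at hNlt
    have hm : ¬ x < s m := Nat.find_min hex (by omega)
    push_neg at hm
    have hmx : s m < x := lt_of_le_of_ne hm (fun h => hx ⟨m, h⟩)
    refine mem_of_superset (Ioo_mem_nhds hmx hNlt) ?_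
    rintro y ⟨hy1, hy2⟩ ⟨n, rfl⟩
    rcases le_or_gt n m with h | h
    · exact absurd (s_strictMono.monotone h) (not_le.mpr hy1)
    · exact absurd (s_strictMono.monotone h) (not_le.mpr hy2)

/-- The counterexample space. -/
abbrev X : Type := ↥(Set.range s)

instance : CompleteSpace X := isClosed_range_s.completeSpace_coe

instance : Nonempty X := ⟨⟨s 0, mem_range_self 0⟩⟩

/-- The equivalence between ℕ and X. -/
noncomputable def e : ℕ ≃ X := Equiv.ofInjective s s_injective

lemma e_coe (n : ℕ) : ((e n : X) : ℝ) = s n := rfl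

lemma dist_e {m n : ℕ} : dist (e m) (e n) = |s m - s n| := by
  rw [show dist (e m) (e n) = dist ((e m : X) : ℝ) ((e n : X) : ℝ) from Subtype.dist_eq _ _,
    e_coe, e_coe, Real.dist_eq]

instance : DiscreteTopology X := by
  rw [discreteTopology_iff_isOpen_singleton]
  intro x
  obtain ⟨n, rfl⟩ := e.surjective x
  have hball : {e n} = Metric.ball (e n) (1 / (n + 1)) := by
    ext y
    obtain ⟨m, rfl⟩ := e.surjective y
    simp only [Set.mem_singleton_iff, Metric.mem_ball]
    constructor
    · intro heq
      rw [heq, dist_self]; positivity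
    · intro h
      by_contra hne
      have hmn : m ≠ n := fun hc => hne (by rw [hc])
      rw [dist_e] at h
      exact absurd (s_sep hmn) (not_le.mpr h)
  rw [hball]
  exact Metric.isOpen_ball

/-- One term of the convergent series. -/
noncomputable def f (k : ℕ) : ℝ := 1 / ((k : ℝ) + 1) ^ 2

lemma summable_f : Summable f := by
  have h : Summable (fun n : ℕ => 1 / (n : ℝ) ^ 2) :=
    Real.summable_one_div_nat_pow.mpr one_lt_two
  have h2 := (summable_nat_add_iff 1).mpr h
  refine h2.congr fun k => ?_
  unfold f
  push_cast
  norm_num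

/-- Tail of the convergent series. -/
noncomputable def rem (n : ℕ) : ℝ := ∑' k : ℕ, f (k + n)

lemma summable_shift (n : ℕ) : Summable (fun k => f (k + n)) :=
  (summable_nat_add_iff n).mpr summable_f

lemma rem_succ (n : ℕ) : rem n = f n + rem (n + 1) := by
  have h := Summable.tsum_eq_zero_add (summable_shift n)
  rw [rem, h, zero_add, rem]
  congr 1
  apply tsum_congr
  intro k
  congr 1
  omega

lemma rem_nonneg (n : ℕ) : 0 ≤ rem n :=
  tsum_nonneg fun k => by unfold f; positivity

noncomputable def φ : X → ℝ := fun x => rem (e.symm x)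

noncomputable def T : X → X := fun x => e (e.symm x + 1)

theorem main :
    ∃ (X : Type) (_ : MetricSpace X) (_ : CompleteSpace X) (_ : Nonempty X)
      (φ : X → ℝ) (T : X → X),
      LowerSemicontinuous φ ∧ BddBelow (Set.range φ) ∧
      (∀ x, (dist x (T x)) ^ 2 ≤ φ x - φ (T x)) ∧
      (∀ x, T x ≠ x) := by
  refine ⟨X, inferInstance, inferInstance, inferInstance, φ, T, ?_, ?_, ?_, ?_⟩
  · exact continuous_of_discreteTopology.lowerSemicontinuous
  · exact ⟨0, by rintro y ⟨x, rfl⟩; exact rem_nonneg _⟩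
  · intro x
    obtain ⟨n, rfl⟩ := e.surjective x
    have hT : T (e n) = e (n + 1) := by rw [T, e.symm_apply_apply]
    rw [hT]
    have hd : dist (e n) (e (n + 1)) = 1 / (n + 1 : ℝ) := by
      rw [dist_e, s_succ, abs_sub_comm]
      have hcalc : s n + 1/(n+1 : ℝ) - s n = 1/(n+1 : ℝ) := by ring
      rw [hcalc, abs_of_nonneg (by positivity)]
    have hφ : φ (e n) - φ (e (n + 1)) = f n := by
      rw [φ, e.symm_apply_apply, φ, e.symm_apply_apply, rem_succ n]; ring
    rw [hd, hφ, f]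
    rw [div_pow, one_pow]
  · intro x h
    obtain ⟨n, rfl⟩ := e.surjective x
    have : n + 1 = n := by
      have := congrArg e.symm h
      rwa [T, e.symm_apply_apply, e.symm_apply_apply] at this
    omega

end KirkCE

/-- Negative answer to Kirk's problem for η(t) = t². -/
theorem kirk_problem_counterexample :
    ∃ (X : Type) (_ : MetricSpace X) (_ : CompleteSpace X) (_ : Nonempty X)
      (φ : X → ℝ) (T : X → X),
      LowerSemicontinuous φ ∧ BddBelow (Set.range φ) ∧
      (∀ x, (dist x (T x)) ^ 2 ≤ φ x - φ (T x)) ∧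
      (∀ x, T x ≠ x) := by
  exact KirkCE.main
end

section
/- Let X = {s_n : n ∈ ℕ} where s_n = ∑_{k=0}^{n−1} 1/(k+1), equipped with the metric induced from ℝ. Then X is a complete metric space, the map T : X → X given by T(s_n) = s_{n+1} has no fixed point, and the function φ : X → ℝ given by φ(s_n) = ∑_{k=n}^{∞} 1/(k+1)² satisfies (d(x, Tx))² ≤ φ(x) − φ(Tx) for all x ∈ X. -/
/-!
The steps d(s_n, s_{n+1}) = 1/(n+1) are positive, so the shift has no fixed point, and they are the
terms of the divergent harmonic series, so s_n → ∞ and the set of partial sums is closed in ℝ,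
hence complete. Their squares are summable, and φ(s_n), the tail of ∑ 1/(k+1)², drops by exactly
1/(n+1)² = d(s_n, s_{n+1})² from one point to the next.
-/

/-- Partial sums of the harmonic series. -/
noncomputable def harmonicPartial (n : ℕ) : ℝ := ∑ k ∈ Finset.range n, (1 : ℝ) / (k + 1)

open Filter Set

lemma isClosed_range_of_tendsto_atTop {α : Type*} [TopologicalSpace α] [LinearOrder α]
    [OrderTopology α] [NoMaxOrder α] [FirstCountableTopology α] {x : ℕ → α}
    (hx : Tendsto x atTop atTop) : IsClosed (range x) :=
  isClosed_range_of_not_tendsto fun l _ hφ =>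
    not_tendsto_nhds_of_tendsto_atTop (hx.comp hφ.tendsto_atTop) l

lemma Summable.tsum_nat_add_sub_tsum_nat_add_succ {α : Type*} [AddCommGroup α]
    [TopologicalSpace α] [IsTopologicalAddGroup α] [T2Space α] {f : ℕ → α} (hf : Summable f)
    (n : ℕ) : ∑' k, f (k + n) - ∑' k, f (k + (n + 1)) = f n := by
  rw [((summable_nat_add_iff n).2 hf).tsum_eq_zero_add]
  simp only [zero_add, add_right_comm _ 1 n, add_assoc, add_sub_cancel_right]

lemma tsum_one_div_add_sq_sub_succ (n : ℕ) :
    ∑' k : ℕ, (1 : ℝ) / ((k + n : ℝ) + 1) ^ 2 - ∑' k : ℕ, (1 : ℝ) / ((k + (n + 1 : ℕ) : ℝ) + 1) ^ 2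
      = 1 / ((n : ℝ) + 1) ^ 2 := by
  have hf : Summable fun k : ℕ => (1 : ℝ) / ((k : ℝ) + 1) ^ 2 :=
    (summable_nat_add_iff 1).2 (Real.summable_one_div_nat_pow.2 one_lt_two) |>.congr
      fun k => by push_cast; rfl
  simpa only [Nat.cast_add] using hf.tsum_nat_add_sub_tsum_nat_add_succ n

lemma harmonicPartial_succ (n : ℕ) :
    harmonicPartial (n + 1) = harmonicPartial n + 1 / (n + 1) := by
  simp [harmonicPartial, Finset.sum_range_succ]

lemma harmonicPartial_strictMono : StrictMono harmonicPartial :=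
  strictMono_nat_of_lt_succ fun n => by
    rw [harmonicPartial_succ]; exact lt_add_of_pos_right _ (by positivity)

lemma dist_harmonicPartial_succ (n : ℕ) :
    dist (harmonicPartial n) (harmonicPartial (n + 1)) = 1 / (n + 1) := by
  rw [dist_comm, Real.dist_eq, harmonicPartial_succ, add_sub_cancel_left, abs_of_pos]
  positivity

lemma isClosed_range_harmonicPartial : IsClosed (range harmonicPartial) :=
  isClosed_range_of_tendsto_atTop Real.tendsto_sum_range_one_div_nat_succ_atTop

theorem harmonic_counterexample :
    CompleteSpace {x : ℝ // ∃ n : ℕ, x = harmonicPartial n} ∧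
    ∀ (T : {x : ℝ // ∃ n : ℕ, x = harmonicPartial n} →
           {x : ℝ // ∃ n : ℕ, x = harmonicPartial n})
      (φ : {x : ℝ // ∃ n : ℕ, x = harmonicPartial n} → ℝ),
      (∀ n : ℕ, (T ⟨harmonicPartial n, n, rfl⟩ : ℝ) = harmonicPartial (n + 1)) →
      (∀ n : ℕ, φ ⟨harmonicPartial n, n, rfl⟩ =
        ∑' k : ℕ, (1 : ℝ) / ((k + n : ℝ) + 1) ^ 2) →
      (∀ x, T x ≠ x) ∧ (∀ x, (dist x (T x)) ^ 2 ≤ φ x - φ (T x)) := by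
  refine ⟨?complete, fun T φ hT hφ => ⟨?noFixedPoint, ?caristi⟩⟩
  case complete =>
    have hX : {x : ℝ | ∃ n : ℕ, x = harmonicPartial n} = range harmonicPartial := by
      ext x; simp [eq_comm]
    exact (hX ▸ isClosed_range_harmonicPartial).completeSpace_coe
  case noFixedPoint =>
    rintro ⟨_, n, rfl⟩ hfix
    refine harmonicPartial_strictMono.injective.ne n.succ_ne_self ?_
    rw [← hT n, hfix]
  case caristi =>
    rintro ⟨_, n, rfl⟩
    have hTn : T ⟨harmonicPartial n, n, rfl⟩ = ⟨harmonicPartial (n + 1), n + 1, rfl⟩ :=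
      Subtype.ext (hT n)
    rw [hTn, hφ, hφ, tsum_one_div_add_sq_sub_succ, Subtype.dist_eq, dist_harmonicPartial_succ,
      div_pow, one_pow]
end

section
/- Let (X,d) be a complete metric space, φ : X → ℝ lower semicontinuous and bounded below, and T : X → X with η(d(x,Tx)) ≤ φ(x) − φ(Tx) for all x, where η is nonnegative with η(0)=0 and η satisfies: there exist c, ε > 0 with η(t) ≥ c·t whenever η(t) ≤ ε. Then the Picard iterates x_{n+1} = T x_n (from any x_0) form a Cauchy sequence. -/
/-!
Along the orbit, `η (d(xₙ, xₙ₊₁)) ≤ φ(xₙ) - φ(xₙ₊₁)`, so the partial sums of `η (d(xₙ, xₙ₊₁))`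
telescope and are bounded by `φ(x₀) - inf φ`. Hence `η (d(xₙ, xₙ₊₁)) → 0`, so eventually it is
below `ε`, where the growth condition gives `d(xₙ, xₙ₊₁) ≤ η (d(xₙ, xₙ₊₁)) / c`. The steps are
therefore summable, and an orbit with summable steps is Cauchy.
-/

open Filter

theorem summable_of_le_sub_succ_of_bddBelow {f g : ℕ → ℝ} (hf : ∀ n, 0 ≤ f n)
    (hfg : ∀ n, f n ≤ g n - g (n + 1)) (hg : BddBelow (Set.range g)) : Summable f := by
  obtain ⟨B, hB⟩ := hg
  refine summable_of_sum_range_le (c := g 0 - B) hf fun N => ?_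
  calc ∑ n ∈ Finset.range N, f n
      ≤ ∑ n ∈ Finset.range N, (g n - g (n + 1)) := Finset.sum_le_sum fun n _ => hfg n
    _ = g 0 - g N := Finset.sum_range_sub' g N
    _ ≤ g 0 - B := by linarith [hB (Set.mem_range_self N)]

theorem summable_of_summable_comp_of_linear_lower_bound {η : ℝ → ℝ} {a : ℕ → ℝ} {c ε : ℝ}
    (hc : 0 < c) (hε : 0 < ε) (hgrow : ∀ t, 0 ≤ t → η t ≤ ε → c * t ≤ η t)
    (ha : ∀ n, 0 ≤ a n) (hη : Summable fun n => η (a n)) : Summable a := by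
  have hsmall : ∀ᶠ n in atTop, η (a n) ≤ ε :=
    hη.tendsto_atTop_zero.eventually (ge_mem_nhds hε)
  refine Summable.of_norm_bounded_eventually_nat (hη.div_const c) ?_
  filter_upwards [hsmall] with n hn
  rw [Real.norm_of_nonneg (ha n), le_div_iff₀ hc, mul_comm]
  exact hgrow (a n) (ha n) hn

theorem picard_iterates_cauchy_general {X : Type*} [MetricSpace X]
    (η : ℝ → ℝ) (hnn : ∀ t, 0 ≤ t → 0 ≤ η t)
    (φ : X → ℝ) (hbd : BddBelow (Set.range φ))
    (c ε : ℝ) (hc : 0 < c) (hε : 0 < ε)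
    (hgrow : ∀ t, 0 ≤ t → η t ≤ ε → c * t ≤ η t)
    (T : X → X) (hT : ∀ x, η (dist x (T x)) ≤ φ x - φ (T x))
    (x : ℕ → X) (hx : ∀ n, x (n + 1) = T (x n)) :
    CauchySeq x := by
  have hdescent : ∀ n, η (dist (x n) (x (n + 1))) ≤ φ (x n) - φ (x (n + 1)) := fun n => by
    simpa only [hx n] using hT (x n)
  have hη_summable : Summable fun n => η (dist (x n) (x (n + 1))) :=
    summable_of_le_sub_succ_of_bddBelow (fun n => hnn _ dist_nonneg) hdescent
      (hbd.mono (Set.range_comp_subset_range x φ))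
  exact cauchySeq_of_summable_dist <|
    summable_of_summable_comp_of_linear_lower_bound hc hε hgrow (fun n => dist_nonneg) hη_summable

theorem picard_iterates_cauchy {X : Type*} [MetricSpace X] [CompleteSpace X]
    (η : ℝ → ℝ) (hnn : ∀ t, 0 ≤ t → 0 ≤ η t) (hη0 : η 0 = 0)
    (φ : X → ℝ) (hlsc : LowerSemicontinuous φ) (hbd : BddBelow (Set.range φ))
    (c ε : ℝ) (hc : 0 < c) (hε : 0 < ε)
    (hgrow : ∀ t, 0 ≤ t → η t ≤ ε → c * t ≤ η t)
    (T : X → X) (hT : ∀ x, η (dist x (T x)) ≤ φ x - φ (T x))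
    (x : ℕ → X) (hx : ∀ n, x (n + 1) = T (x n)) :
    CauchySeq x :=
  picard_iterates_cauchy_general η hnn φ hbd c ε hc hε hgrow T hT x hx
end
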